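/- Let μ, ν be probability measures on ℝ^d with finite first moments and let K(x,y) = -‖x - y‖ be the Riesz kernel. Then MMD²(μ,ν) := ∬K dμdμ - 2∬K dμdν + ∬K dνdν ≥ 0, with equality if and only if μ = ν. -/

import Mathlib

open MeasureTheory

noncomputable def MMD2 {d : ℕ} (μ ν : Measure (EuclideanSpace ℝ (Fin d))) : ℝ :=
  (∫ x, ∫ y, -‖x - y‖ ∂μ ∂μ) - 2 * (∫ x, ∫ y, -‖x - y‖ ∂ν ∂μ) +
    ∫ x, ∫ y, -‖x - y‖ ∂ν ∂ν

/-!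
For `a ≥ 0`, substituting `s = t a` gives `energyConst * a = ∫₀^∞ (1 - exp (-(t a)² / 2)) / t² dt`,
so by Fubini `energyConst * MMD²(μ, ν) = ∫₀^∞ MMD²_t(μ, ν) / t² dt`, where `MMD²_t` is the MMD for
the Gaussian kernel `exp (-(t ‖x - y‖)² / 2)`. This kernel is the characteristic function of the
image `γ_t` of the standard Gaussian under `ξ ↦ t • ξ`, and Fubini again turns `MMD²_t(μ, ν)` into
`∫ ‖φ_μ - φ_ν‖² dγ_t ≥ 0`, with `φ` the characteristic functions. If `MMD²(μ, ν) = 0`, some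
`MMD²_t(μ, ν)` with `t > 0` vanishes; as `γ_t` charges every open set and `φ_μ - φ_ν` is
continuous, `φ_μ = φ_ν`, hence `μ = ν`.
-/

open ProbabilityTheory Real Set Filter ComplexConjugate

section KernelMMD

variable {E : Type*} [AddGroup E] [MeasurableSpace E]

noncomputable def kernelMean (k : E → ℝ) (α β : Measure E) : ℝ :=
  ∫ x, ∫ y, k (x - y) ∂β ∂α

noncomputable def kernelMMD2 (k : E → ℝ) (μ ν : Measure E) : ℝ :=
  kernelMean k μ μ - 2 * kernelMean k μ ν + kernelMean k ν ν

lemma kernelMean_eq_integral_prod {α β : Measure E} [SFinite α] [SFinite β] {k : E → ℝ}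
    (hk : Integrable (fun p : E × E => k (p.1 - p.2)) (α.prod β)) :
    kernelMean k α β = ∫ p, k (p.1 - p.2) ∂(α.prod β) :=
  (integral_prod _ hk).symm

end KernelMMD

lemma MMD2_eq_kernelMMD2 {d : ℕ} (μ ν : Measure (EuclideanSpace ℝ (Fin d))) :
    MMD2 μ ν = kernelMMD2 (fun u => -‖u‖) μ ν :=
  rfl

noncomputable def gaussianKernel {E : Type*} [Norm E] (t : ℝ) (u : E) : ℝ :=
  rexp (-(t * ‖u‖) ^ 2 / 2)

lemma gaussianKernel_nonneg {E : Type*} [Norm E] (t : ℝ) (u : E) : 0 ≤ gaussianKernel t u :=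
  exp_nonneg _

lemma gaussianKernel_le_one {E : Type*} [Norm E] (t : ℝ) (u : E) : gaussianKernel t u ≤ 1 :=
  exp_le_one_iff.2 (by nlinarith [sq_nonneg (t * ‖u‖)])

section Subordination

lemma one_sub_exp_neg_sq_div_sq_nonneg (s : ℝ) : 0 ≤ (1 - rexp (-s ^ 2 / 2)) / s ^ 2 :=
  div_nonneg (sub_nonneg.2 (exp_le_one_iff.2 (by nlinarith [sq_nonneg s]))) (sq_nonneg s)

lemma integrableOn_one_sub_exp_neg_sq_div_sq :
    IntegrableOn (fun s => (1 - rexp (-s ^ 2 / 2)) / s ^ 2) (Ioi 0) := by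
  have hmeas : AEStronglyMeasurable (fun s : ℝ => (1 - rexp (-s ^ 2 / 2)) / s ^ 2) volume :=
    (by fun_prop : Measurable fun s : ℝ => (1 - rexp (-s ^ 2 / 2)) / s ^ 2).aestronglyMeasurable
  rw [← Ioc_union_Ioi_eq_Ioi zero_le_one]
  refine IntegrableOn.union ?_ ?_
  · refine IntegrableOn.of_bound measure_Ioc_lt_top hmeas.restrict (1 / 2) (ae_of_all _ fun s => ?_)
    rw [Real.norm_of_nonneg (one_sub_exp_neg_sq_div_sq_nonneg s)]
    rcases eq_or_ne s 0 with rfl | hs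
    · norm_num
    · rw [div_le_iff₀ (by positivity)]
      linarith [add_one_le_exp (-s ^ 2 / 2)]
  · refine (integrableOn_Ioi_rpow_of_lt (by norm_num : (-2 : ℝ) < -1) one_pos).mono'
      hmeas.restrict ((ae_restrict_iff' measurableSet_Ioi).2 (ae_of_all _ fun s hs => ?_))
    have hs : (0 : ℝ) < s := one_pos.trans hs
    rw [Real.norm_of_nonneg (one_sub_exp_neg_sq_div_sq_nonneg s), rpow_neg hs.le, rpow_two,
      inv_eq_one_div]
    exact div_le_div_of_nonneg_right (by linarith [exp_pos (-s ^ 2 / 2)]) (sq_nonneg s)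

-- `energyConst = √(π / 2)`, but only its positivity is needed.
noncomputable def energyConst : ℝ := ∫ s in Ioi 0, (1 - rexp (-s ^ 2 / 2)) / s ^ 2

lemma energyConst_pos : 0 < energyConst := by
  rw [energyConst, setIntegral_pos_iff_support_of_nonneg_ae
    (ae_of_all _ one_sub_exp_neg_sq_div_sq_nonneg) integrableOn_one_sub_exp_neg_sq_div_sq]
  have hsupp : Ioi (0 : ℝ) ⊆ Function.support fun s => (1 - rexp (-s ^ 2 / 2)) / s ^ 2 :=
    fun s (hs : 0 < s) => (div_pos (sub_pos.2 (exp_lt_one_iff.2 (by nlinarith))) (by positivity)).ne'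
  rw [inter_eq_right.2 hsupp]
  simp

lemma one_sub_exp_neg_mul_sq_div_sq_eq (a t : ℝ) :
    (1 - rexp (-(t * a) ^ 2 / 2)) / t ^ 2 =
      a ^ 2 * ((1 - rexp (-(a * t) ^ 2 / 2)) / (a * t) ^ 2) := by
  rcases eq_or_ne a 0 with rfl | ha
  · simp
  rcases eq_or_ne t 0 with rfl | ht
  · simp
  field_simp

lemma integrableOn_one_sub_exp_neg_mul_sq_div_sq {a : ℝ} (ha : 0 < a) :
    IntegrableOn (fun t => (1 - rexp (-(t * a) ^ 2 / 2)) / t ^ 2) (Ioi 0) := by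
  simp_rw [one_sub_exp_neg_mul_sq_div_sq_eq a]
  refine ((integrableOn_Ioi_comp_mul_left_iff
    (fun s => (1 - rexp (-s ^ 2 / 2)) / s ^ 2) 0 ha).2 ?_).integrable.const_mul _
  simpa using integrableOn_one_sub_exp_neg_sq_div_sq

lemma integral_one_sub_exp_neg_mul_sq_div_sq {a : ℝ} (ha : 0 ≤ a) :
    ∫ t in Ioi 0, (1 - rexp (-(t * a) ^ 2 / 2)) / t ^ 2 = energyConst * a := by
  rcases ha.eq_or_lt with rfl | ha
  · simp
  simp_rw [one_sub_exp_neg_mul_sq_div_sq_eq a]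
  rw [integral_const_mul, integral_comp_mul_left_Ioi (fun s => (1 - rexp (-s ^ 2 / 2)) / s ^ 2)
    0 ha, mul_zero, smul_eq_mul, ← energyConst]
  field_simp

lemma integral_gaussianKernel_sub_one_div_sq {E : Type*} [SeminormedAddGroup E] (u : E) :
    ∫ t in Ioi 0, (gaussianKernel t u - 1) / t ^ 2 = energyConst * -‖u‖ := by
  rw [mul_neg, ← integral_one_sub_exp_neg_mul_sq_div_sq (norm_nonneg u), ← integral_neg]
  simp only [gaussianKernel, ← neg_div, neg_sub]

end Subordination

section EnergyAsGaussianMixture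

variable {E : Type*} [NormedAddCommGroup E] [MeasurableSpace E] [BorelSpace E]
  [SecondCountableTopology E] {α β : Measure E}

lemma integrable_norm_sub_prod [IsFiniteMeasure α] [IsFiniteMeasure β]
    (hα : Integrable (fun x => ‖x‖) α) (hβ : Integrable (fun x => ‖x‖) β) :
    Integrable (fun p : E × E => ‖p.1 - p.2‖) (α.prod β) :=
  ((hα.comp_fst β).add (hβ.comp_snd α)).mono' (by fun_prop : Continuous _).aestronglyMeasurable
    (ae_of_all _ fun p => by simpa using norm_sub_le p.1 p.2)

lemma integrable_gaussianKernel_prod [IsFiniteMeasure α] [IsFiniteMeasure β] (t : ℝ) :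
    Integrable (fun p : E × E => gaussianKernel t (p.1 - p.2)) (α.prod β) :=
  Integrable.of_bound (by unfold gaussianKernel; fun_prop : Continuous _).aestronglyMeasurable 1
    (ae_of_all _ fun p => by
      rw [Real.norm_of_nonneg (gaussianKernel_nonneg t _)]; exact gaussianKernel_le_one t _)

lemma integrable_gaussianKernel_sub_one_div_sq_prod [IsFiniteMeasure α] [IsFiniteMeasure β]
    (hα : Integrable (fun x => ‖x‖) α) (hβ : Integrable (fun x => ‖x‖) β) :
    Integrable (fun q : (E × E) × ℝ => (gaussianKernel q.2 (q.1.1 - q.1.2) - 1) / q.2 ^ 2)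
      ((α.prod β).prod (volume.restrict (Ioi 0))) := by
  have hnorm : ∀ (p : E × E) (t : ℝ), ‖(gaussianKernel t (p.1 - p.2) - 1) / t ^ 2‖ =
      (1 - rexp (-(t * ‖p.1 - p.2‖) ^ 2 / 2)) / t ^ 2 := fun p t => by
    rw [Real.norm_of_nonpos (div_nonpos_of_nonpos_of_nonneg
      (sub_nonpos.2 (gaussianKernel_le_one t _)) (sq_nonneg t)), ← neg_div, neg_sub, gaussianKernel]
  refine (integrable_prod_iff
    (Measurable.aestronglyMeasurable (by unfold gaussianKernel; fun_prop))).2 ⟨?_, ?_⟩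
  · refine ae_of_all _ fun p => Integrable.mono' ?_
      (Measurable.aestronglyMeasurable (by unfold gaussianKernel; fun_prop))
      (ae_of_all _ fun t => (hnorm p t).le)
    rcases (norm_nonneg (p.1 - p.2)).eq_or_lt with h | h
    · simp [← h]
    · exact integrableOn_one_sub_exp_neg_mul_sq_div_sq h
  · simp_rw [hnorm, integral_one_sub_exp_neg_mul_sq_div_sq (norm_nonneg _)]
    exact (integrable_norm_sub_prod hα hβ).const_mul _

variable [IsProbabilityMeasure α] [IsProbabilityMeasure β]

lemma integral_prod_gaussianKernel_sub_one_div_sq (t : ℝ) :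
    ∫ p, (gaussianKernel t (p.1 - p.2) - 1) / t ^ 2 ∂(α.prod β) =
      (kernelMean (gaussianKernel t) α β - 1) / t ^ 2 := by
  rw [integral_div, integral_sub (integrable_gaussianKernel_prod t) (integrable_const 1),
    kernelMean_eq_integral_prod (integrable_gaussianKernel_prod t)]
  simp

lemma integrableOn_kernelMean_gaussianKernel_sub_one_div_sq
    (hα : Integrable (fun x => ‖x‖) α) (hβ : Integrable (fun x => ‖x‖) β) :
    IntegrableOn (fun t => (kernelMean (gaussianKernel t) α β - 1) / t ^ 2) (Ioi 0) := by
  rw [IntegrableOn]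
  simpa only [integral_prod_gaussianKernel_sub_one_div_sq] using
    (integrable_gaussianKernel_sub_one_div_sq_prod hα hβ).integral_prod_right

lemma integral_kernelMean_gaussianKernel_sub_one_div_sq
    (hα : Integrable (fun x => ‖x‖) α) (hβ : Integrable (fun x => ‖x‖) β) :
    ∫ t in Ioi 0, (kernelMean (gaussianKernel t) α β - 1) / t ^ 2 =
      energyConst * kernelMean (fun u => -‖u‖) α β := by
  have hF := integrable_gaussianKernel_sub_one_div_sq_prod hα hβ
  simp_rw [← integral_prod_gaussianKernel_sub_one_div_sq]
  rw [← integral_prod_symm _ hF, integral_prod _ hF]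
  simp_rw [integral_gaussianKernel_sub_one_div_sq]
  rw [integral_const_mul, kernelMean_eq_integral_prod (integrable_norm_sub_prod hα hβ).neg]

end EnergyAsGaussianMixture

section Fourier

open scoped RealInnerProductSpace

variable {E : Type*} [NormedAddCommGroup E] [InnerProductSpace ℝ E] [MeasurableSpace E]
  [BorelSpace E] [SecondCountableTopology E]

lemma integral_integral_charFun_sub (α β γ : Measure E) [IsFiniteMeasure α] [IsFiniteMeasure β]
    [IsFiniteMeasure γ] :
    ∫ x, ∫ y, charFun γ (x - y) ∂β ∂α = ∫ ξ, charFun α ξ * conj (charFun β ξ) ∂γ := by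
  have hsplit : ∀ x y ξ : E, Complex.exp (⟪ξ, x - y⟫ * Complex.I) =
      Complex.exp (⟪x, ξ⟫ * Complex.I) * conj (Complex.exp (⟪y, ξ⟫ * Complex.I)) := by
    intro x y ξ
    simp only [← Complex.exp_conj, map_mul, Complex.conj_ofReal, Complex.conj_I,
      ← Complex.exp_add, inner_sub_right, real_inner_comm ξ]
    congr 1; push_cast; ring
  have hinner : ∀ x, ∫ y, charFun γ (x - y) ∂β =
      ∫ ξ, Complex.exp (⟪x, ξ⟫ * Complex.I) * conj (charFun β ξ) ∂γ := by
    intro x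
    simp_rw [charFun_apply, hsplit]
    rw [integral_integral_swap]
    · simp_rw [integral_const_mul, ← integral_conj]
    · refine Integrable.of_bound (by fun_prop) 1 (ae_of_all _ fun ⟨y, ξ⟩ => ?_)
      simp [Complex.norm_exp_ofReal_mul_I]
  simp_rw [hinner]
  rw [integral_integral_swap]
  · simp_rw [integral_mul_const]
    rfl
  · refine Integrable.of_bound (by fun_prop) (β.real univ) (ae_of_all _ fun ⟨x, ξ⟩ => ?_)
    simp [Complex.norm_exp_ofReal_mul_I, norm_charFun_le]

variable {γ : Measure E} [IsFiniteMeasure γ] {k : E → ℝ}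

lemma integrable_charFun_mul_conj (α β : Measure E) [IsFiniteMeasure α] [IsFiniteMeasure β] :
    Integrable (fun ξ => charFun α ξ * conj (charFun β ξ)) γ :=
  Integrable.of_bound (by fun_prop) (α.real univ * β.real univ) (ae_of_all _ fun ξ => by
    simpa using mul_le_mul (norm_charFun_le ξ) (norm_charFun_le ξ) (norm_nonneg _) (by positivity))

lemma integrable_re_charFun_mul_conj (α β : Measure E) [IsFiniteMeasure α] [IsFiniteMeasure β] :
    Integrable (fun ξ => (charFun α ξ * conj (charFun β ξ)).re) γ :=
  (integrable_charFun_mul_conj α β).re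

lemma kernelMean_eq_integral_re (hk : ∀ u, charFun γ u = k u) (α β : Measure E)
    [IsFiniteMeasure α] [IsFiniteMeasure β] :
    kernelMean k α β = ∫ ξ, (charFun α ξ * conj (charFun β ξ)).re ∂γ := by
  have h := integral_re (integrable_charFun_mul_conj (γ := γ) α β)
  simp only [RCLike.re_to_complex] at h
  rw [h, ← integral_integral_charFun_sub, ← Complex.ofReal_re (kernelMean k α β), kernelMean]
  simp_rw [← integral_complex_ofReal, hk]

lemma kernelMMD2_eq_integral_norm_charFun_sub_sq (hk : ∀ u, charFun γ u = k u)
    (μ ν : Measure E) [IsFiniteMeasure μ] [IsFiniteMeasure ν] :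
    kernelMMD2 k μ ν = ∫ ξ, ‖charFun μ ξ - charFun ν ξ‖ ^ 2 ∂γ := by
  have hexpand : ∀ ξ, ‖charFun μ ξ - charFun ν ξ‖ ^ 2 = (charFun μ ξ * conj (charFun μ ξ)).re
      - 2 * (charFun μ ξ * conj (charFun ν ξ)).re + (charFun ν ξ * conj (charFun ν ξ)).re := by
    intro ξ
    simp only [Complex.mul_conj, Complex.ofReal_re, Complex.sq_norm, Complex.normSq_sub]
    ring
  have hI := integrable_re_charFun_mul_conj (γ := γ)
  simp_rw [hexpand, kernelMMD2, kernelMean_eq_integral_re hk]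
  rw [integral_add _ (hI ν ν), integral_sub (hI μ μ) ((hI μ ν).const_mul 2), integral_const_mul]
  exact (hI μ μ).sub ((hI μ ν).const_mul 2)

lemma eq_of_kernelMMD2_eq_zero [CompleteSpace E] [γ.IsOpenPosMeasure]
    (hk : ∀ u, charFun γ u = k u) {μ ν : Measure E} [IsFiniteMeasure μ] [IsFiniteMeasure ν]
    (h : kernelMMD2 k μ ν = 0) : μ = ν := by
  have hcont : Continuous fun ξ => ‖charFun μ ξ - charFun ν ξ‖ ^ 2 := by fun_prop
  have hint : Integrable (fun ξ => ‖charFun μ ξ - charFun ν ξ‖ ^ 2) γ := by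
    refine Integrable.of_bound hcont.aestronglyMeasurable ((μ.real univ + ν.real univ) ^ 2)
      (ae_of_all _ fun ξ => ?_)
    rw [Real.norm_of_nonneg (by positivity)]
    exact pow_le_pow_left₀ (norm_nonneg _)
      ((norm_sub_le _ _).trans (add_le_add (norm_charFun_le ξ) (norm_charFun_le ξ))) 2
  rw [kernelMMD2_eq_integral_norm_charFun_sub_sq hk,
    integral_eq_zero_iff_of_nonneg (fun _ => by positivity) hint] at h
  replace h := (hcont.ae_eq_iff_eq γ continuous_zero).1 h
  refine Measure.ext_of_charFun (funext fun ξ => ?_)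
  simpa [sub_eq_zero] using congrFun h ξ

end Fourier

section Gaussian

variable {E : Type*} [NormedAddCommGroup E] [InnerProductSpace ℝ E] [FiniteDimensional ℝ E]
  [MeasurableSpace E] [BorelSpace E]

instance isOpenPosMeasure_stdGaussian : (stdGaussian E).IsOpenPosMeasure := by
  have : (gaussianReal 0 1).IsOpenPosMeasure :=
    (gaussianReal_absolutelyContinuous' 0 one_ne_zero).isOpenPosMeasure
  let b := stdOrthonormalBasis ℝ E
  exact (by fun_prop : Continuous fun x : Fin _ → ℝ => ∑ i, x i • b i).isOpenPosMeasure_map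
    fun v => ⟨fun i => b.repr v i, b.sum_repr v⟩

lemma charFun_map_smul_stdGaussian (t : ℝ) (u : E) :
    charFun ((stdGaussian E).map (t • ·)) u = gaussianKernel t u := by
  simp [charFun_map_smul, charFun_stdGaussian, gaussianKernel, norm_smul, mul_pow,
    ← Complex.ofReal_pow]

lemma kernelMMD2_gaussianKernel_nonneg (t : ℝ) (μ ν : Measure E) [IsFiniteMeasure μ]
    [IsFiniteMeasure ν] : 0 ≤ kernelMMD2 (gaussianKernel t) μ ν := by
  rw [kernelMMD2_eq_integral_norm_charFun_sub_sq (charFun_map_smul_stdGaussian t)]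
  positivity

lemma eq_of_kernelMMD2_gaussianKernel_eq_zero {t : ℝ} (ht : t ≠ 0) {μ ν : Measure E}
    [IsFiniteMeasure μ] [IsFiniteMeasure ν] (h : kernelMMD2 (gaussianKernel t) μ ν = 0) :
    μ = ν :=
  have : ((stdGaussian E).map (t • ·)).IsOpenPosMeasure :=
    (continuous_const_smul t).isOpenPosMeasure_map fun v => ⟨t⁻¹ • v, smul_inv_smul₀ ht v⟩
  eq_of_kernelMMD2_eq_zero (charFun_map_smul_stdGaussian t) h

end Gaussian

section EnergyDistance

variable {E : Type*} [NormedAddCommGroup E] [MeasurableSpace E] [BorelSpace E]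
  [SecondCountableTopology E] {μ ν : Measure E} [IsProbabilityMeasure μ] [IsProbabilityMeasure ν]

lemma integrableOn_kernelMMD2_gaussianKernel_div_sq
    (hμ : Integrable (fun x => ‖x‖) μ) (hν : Integrable (fun x => ‖x‖) ν) :
    IntegrableOn (fun t => kernelMMD2 (gaussianKernel t) μ ν / t ^ 2) (Ioi 0) := by
  refine ((integrableOn_kernelMean_gaussianKernel_sub_one_div_sq hμ hμ).sub
    ((integrableOn_kernelMean_gaussianKernel_sub_one_div_sq hμ hν).const_mul 2)).add
    (integrableOn_kernelMean_gaussianKernel_sub_one_div_sq hν hν) |>.congr_fun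
    (fun t _ => ?_) measurableSet_Ioi
  simp only [Pi.add_apply, Pi.sub_apply, kernelMMD2]
  ring

lemma integral_kernelMMD2_gaussianKernel_div_sq
    (hμ : Integrable (fun x => ‖x‖) μ) (hν : Integrable (fun x => ‖x‖) ν) :
    ∫ t in Ioi 0, kernelMMD2 (gaussianKernel t) μ ν / t ^ 2 =
      energyConst * kernelMMD2 (fun u => -‖u‖) μ ν := by
  have hμμ := integrableOn_kernelMean_gaussianKernel_sub_one_div_sq hμ hμ
  have hμν := integrableOn_kernelMean_gaussianKernel_sub_one_div_sq hμ hν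
  have hμμν : IntegrableOn (fun t => (kernelMean (gaussianKernel t) μ μ - 1) / t ^ 2
      - 2 * ((kernelMean (gaussianKernel t) μ ν - 1) / t ^ 2)) (Ioi 0) :=
    hμμ.sub (hμν.const_mul 2)
  have hsplit : ∀ t : ℝ, kernelMMD2 (gaussianKernel t) μ ν / t ^ 2 =
      (kernelMean (gaussianKernel t) μ μ - 1) / t ^ 2
        - 2 * ((kernelMean (gaussianKernel t) μ ν - 1) / t ^ 2)
        + (kernelMean (gaussianKernel t) ν ν - 1) / t ^ 2 := fun t => by
    rw [kernelMMD2]; ring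
  simp_rw [hsplit]
  rw [integral_add hμμν (integrableOn_kernelMean_gaussianKernel_sub_one_div_sq hν hν),
    integral_sub hμμ (hμν.const_mul 2), integral_const_mul,
    integral_kernelMean_gaussianKernel_sub_one_div_sq hμ hμ,
    integral_kernelMean_gaussianKernel_sub_one_div_sq hμ hν,
    integral_kernelMean_gaussianKernel_sub_one_div_sq hν hν, kernelMMD2]
  ring

end EnergyDistance

theorem stmt12 {d : ℕ} (μ ν : Measure (EuclideanSpace ℝ (Fin d)))
    [IsProbabilityMeasure μ] [IsProbabilityMeasure ν]
    (hμ : Integrable (fun x => ‖x‖) μ) (hν : Integrable (fun x => ‖x‖) ν) :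
    0 ≤ MMD2 μ ν ∧ (MMD2 μ ν = 0 ↔ μ = ν) := by
  have hval := integral_kernelMMD2_gaussianKernel_div_sq hμ hν
  rw [← MMD2_eq_kernelMMD2] at hval
  have hnonneg : ∀ t, 0 ≤ kernelMMD2 (gaussianKernel t) μ ν / t ^ 2 := fun t =>
    div_nonneg (kernelMMD2_gaussianKernel_nonneg t μ ν) (sq_nonneg t)
  refine ⟨(mul_nonneg_iff_of_pos_left energyConst_pos).1 ?_, fun h => ?_,
    fun h => by subst h; rw [MMD2]; ring⟩
  · exact hval ▸ setIntegral_nonneg measurableSet_Ioi fun t _ => hnonneg t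
  rw [h, mul_zero, integral_eq_zero_iff_of_nonneg hnonneg
    (integrableOn_kernelMMD2_gaussianKernel_div_sq hμ hν)] at hval
  have : (ae (volume.restrict (Ioi (0 : ℝ)))).NeBot := ae_restrict_neBot.2 (by simp)
  obtain ⟨t, ht, ht0 : 0 < t⟩ := (hval.and (ae_restrict_mem measurableSet_Ioi)).exists
  exact eq_of_kernelMMD2_gaussianKernel_eq_zero ht0.ne'
    ((div_eq_zero_iff.1 ht).resolve_right (pow_ne_zero 2 ht0.ne'))
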